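/- Let φ : ℝ³ → ℝ be C³, and suppose that the function ℓ := i·(L(Ā) − L̄(A)) vanishes nowhere on ℝ³. Define the operator T f := ℓ·f_u and the function P := ( L(ℓ) + T( φ_z/(i + φ_u) ) ) / ℓ. Then for every C² function f : ℝ³ → ℂ: (i) L(L̄ f) − L̄(L f) = −i · T f; (ii) L(T f) − T(L f) = P · T f; (iii) L̄(T f) − T(L̄ f) = conj(P) · T f. (This is the Lie structure [L, L̄] = −i T, [L, T] = P·T, [L̄, T] = P̄·T of the frame {L, L̄, T} for a hypersurface M³ ⊂ ℂ² of General Class I.) -/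

import Mathlib

noncomputable section
open Complex ComplexConjugate

/-- Points of `ℝ³`, with coordinates `(x, y, u)` and `z = x + i y`. -/
abbrev V3 := Fin 3 → ℝ

/-- Partial derivative in the `j`-th coordinate direction. -/
def pd (j : Fin 3) (f : V3 → ℂ) : V3 → ℂ := fun p => fderiv ℝ f p (Pi.single j 1)

/-- Wirtinger derivative `f_z := (f_x − i f_y)/2`. -/
def wz (f : V3 → ℂ) : V3 → ℂ := fun p => (pd 0 f p - I * pd 1 f p) / 2

/-- Wirtinger derivative `f_z̄ := (f_x + i f_y)/2`. -/
def wzb (f : V3 → ℂ) : V3 → ℂ := fun p => (pd 0 f p + I * pd 1 f p) / 2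

/-- Partial derivative `f_u`. -/
def du (f : V3 → ℂ) : V3 → ℂ := pd 2 f

/-- Complexification of a real-valued function. -/
def cl (φ : V3 → ℝ) : V3 → ℂ := fun p => (φ p : ℂ)

/-- The coefficient `A := −φ_z/(i + φ_u)`. -/
def Afun (φ : V3 → ℝ) : V3 → ℂ := fun p => -(wz (cl φ) p) / (I + du (cl φ) p)

/-- The operator `L f := f_z + A·f_u`. -/
def Lop (φ : V3 → ℝ) (f : V3 → ℂ) : V3 → ℂ := fun p => wz f p + Afun φ p * du f p

/-- The conjugate operator `L̄ f := f_z̄ + Ā·f_u`. -/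
def Lbop (φ : V3 → ℝ) (f : V3 → ℂ) : V3 → ℂ :=
  fun p => wzb f p + conj (Afun φ p) * du f p

/-- The function `ℓ := i·(L(Ā) − L̄(A))`. -/
def ell (φ : V3 → ℝ) : V3 → ℂ := fun p =>
  I * (Lop φ (fun q => conj (Afun φ q)) p - Lbop φ (Afun φ) p)

/-- The operator `T f := ℓ·f_u`. -/
def Tof (φ : V3 → ℝ) (f : V3 → ℂ) : V3 → ℂ := fun p => ell φ p * du f p

/-- The function `P := ( L(ℓ) + T( φ_z/(i + φ_u) ) ) / ℓ`. -/
def Pfun (φ : V3 → ℝ) : V3 → ℂ := fun p =>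
  (Lop φ (ell φ) p + Tof φ (fun q => wz (cl φ) q / (I + du (cl φ) q)) p) / ell φ p

/-!
`L`, `L̄` and `T` are complex vector fields `∑ⱼ aⱼ ∂ⱼ` whose `∂ₓ`, `∂_y` coefficients are
constant. In a commutator of vector fields the second-order terms cancel by symmetry of second
derivatives, so `[X, Y] = ∑ⱼ (X bⱼ − Y aⱼ) ∂ⱼ`, and here only the `∂ᵤ` term survives:
`[L, L̄] = (L Ā − L̄ A) ∂ᵤ = −i T`, `[L, T] = (L ℓ − T A) ∂ᵤ`, `[L̄, T] = (L̄ ℓ − T Ā) ∂ᵤ`.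
The last two are `P T` and `P̄ T` because `φ_z/(i + φ_u) = −A` and `ℓ` is real.
-/

section PartialDerivatives

variable {f g : V3 → ℂ} {p : V3} {i j : Fin 3}

lemma pd_const (c : ℂ) : pd j (fun _ => c) p = 0 := by
  simp [pd]

lemma pd_mul (hf : DifferentiableAt ℝ f p) (hg : DifferentiableAt ℝ g p) :
    pd j (fun q => f q * g q) p = pd j f p * g p + f p * pd j g p := by
  simp [pd, fderiv_fun_mul hf hg]
  ring

lemma pd_neg : pd j (fun q => -f q) p = -pd j f p := by
  simp [pd]

lemma pd_sum {ι : Type*} (s : Finset ι) {F : ι → V3 → ℂ}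
    (hF : ∀ k ∈ s, DifferentiableAt ℝ (F k) p) :
    pd j (fun q => ∑ k ∈ s, F k q) p = ∑ k ∈ s, pd j (F k) p := by
  simp [pd, fderiv_fun_sum hF]

lemma pd_conj : pd j (fun q => conj (f q)) p = conj (pd j f p) := by
  simp only [pd, show (starRingEnd ℂ) = (star : ℂ → ℂ) from rfl, fderiv_star,
    ContinuousLinearMap.coe_comp, Function.comp_apply]
  rfl

lemma ContDiff.pd {n m : WithTop ℕ∞} (hf : ContDiff ℝ n f) (h : m + 1 ≤ n) :
    ContDiff ℝ m (pd j f) :=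
  (hf.fderiv_right h).clm_apply contDiff_const

lemma pd_comm (hf : ContDiff ℝ 2 f) : pd i (pd j f) p = pd j (pd i f) p := by
  have hdf : DifferentiableAt ℝ (fderiv ℝ f) p :=
    (hf.fderiv_right (m := 1) (by norm_num)).differentiable one_ne_zero p
  have hpd : ∀ v w : V3, fderiv ℝ (fun q => fderiv ℝ f q v) p w
      = fderiv ℝ (fderiv ℝ f) p w v := by
    intro v w
    simp [fderiv_clm_apply hdf (differentiableAt_const v)]
  have hsym := hf.contDiffAt.isSymmSndFDerivAt (x := p)
    (by simp [minSmoothness_of_isRCLikeNormedField])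
  change fderiv ℝ (fun q => fderiv ℝ f q _) p _ = fderiv ℝ (fun q => fderiv ℝ f q _) p _
  rw [hpd, hpd, hsym]

end PartialDerivatives

def vecField (a : Fin 3 → V3 → ℂ) (f : V3 → ℂ) : V3 → ℂ := fun p => ∑ j, a j p * pd j f p

section VectorFields

variable {a b : Fin 3 → V3 → ℂ} {f : V3 → ℂ} {p : V3}

lemma vecField_const (c : ℂ) : vecField a (fun _ => c) p = 0 := by
  simp [vecField, pd_const]

lemma ContDiff.vecField {n m : WithTop ℕ∞} (hf : ContDiff ℝ n f)
    (ha : ∀ j, ContDiff ℝ m (a j)) (h : m + 1 ≤ n) : ContDiff ℝ m (vecField a f) :=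
  ContDiff.sum fun j _ => (ha j).mul (hf.pd h)

lemma vecField_vecField (hb : ∀ k, DifferentiableAt ℝ (b k) p) (hf : ContDiff ℝ 2 f) :
    vecField a (vecField b f) p
      = ∑ k, vecField a (b k) p * pd k f p + ∑ j, ∑ k, a j p * b k p * pd j (pd k f) p := by
  have hpdf : ∀ k, DifferentiableAt ℝ (pd k f) p := fun k =>
    (hf.pd (m := 1) (by norm_num)).differentiable one_ne_zero p
  calc vecField a (vecField b f) p
      = ∑ j, ∑ k, (a j p * pd j (b k) p * pd k f p + a j p * b k p * pd j (pd k f) p) := by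
        refine Finset.sum_congr rfl fun j _ => ?_
        unfold vecField
        rw [pd_sum (F := fun k q => b k q * pd k f q) _ fun k _ => (hb k).mul (hpdf k),
          Finset.mul_sum]
        refine Finset.sum_congr rfl fun k _ => ?_
        rw [pd_mul (hb k) (hpdf k)]
        ring
    _ = _ := by
        simp only [Finset.sum_add_distrib, vecField, Finset.sum_mul]
        rw [Finset.sum_comm]

theorem vecField_commutator (ha : ∀ k, DifferentiableAt ℝ (a k) p)
    (hb : ∀ k, DifferentiableAt ℝ (b k) p) (hf : ContDiff ℝ 2 f) :
    vecField a (vecField b f) p - vecField b (vecField a f) p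
      = ∑ k, (vecField a (b k) p - vecField b (a k) p) * pd k f p := by
  have hsym : ∑ j, ∑ k, a j p * b k p * pd j (pd k f) p
      = ∑ j, ∑ k, b j p * a k p * pd j (pd k f) p := by
    rw [Finset.sum_comm]
    refine Finset.sum_congr rfl fun j _ => Finset.sum_congr rfl fun k _ => ?_
    rw [pd_comm hf]
    ring
  rw [vecField_vecField hb hf, vecField_vecField ha hf, hsym, add_sub_add_right_eq_sub,
    ← Finset.sum_sub_distrib]
  simp only [sub_mul]

theorem vecField_commutator_of_const (α β α' β' : ℂ) {c c' : V3 → ℂ}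
    (hc : DifferentiableAt ℝ c p) (hc' : DifferentiableAt ℝ c' p) (hf : ContDiff ℝ 2 f) :
    vecField ![fun _ => α, fun _ => β, c] (vecField ![fun _ => α', fun _ => β', c'] f) p
        - vecField ![fun _ => α', fun _ => β', c'] (vecField ![fun _ => α, fun _ => β, c] f) p
      = (vecField ![fun _ => α, fun _ => β, c] c' p
          - vecField ![fun _ => α', fun _ => β', c'] c p) * du f p := by
  have hdiff : ∀ (γ δ : ℂ) {e : V3 → ℂ}, DifferentiableAt ℝ e p →
      ∀ k, DifferentiableAt ℝ (![fun _ => γ, fun _ => δ, e] k) p := by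
    intro γ δ e he k
    fin_cases k
    exacts [differentiableAt_const γ, differentiableAt_const δ, he]
  rw [vecField_commutator (hdiff α β hc) (hdiff α' β' hc') hf]
  simp [Fin.sum_univ_three, vecField_const, du]

end VectorFields

section ClassI

variable {φ : V3 → ℝ} {f g : V3 → ℂ} {p : V3}

lemma Lop_eq_vecField (φ : V3 → ℝ) :
    Lop φ = vecField ![fun _ => 1 / 2, fun _ => -I / 2, Afun φ] := by
  ext f p
  simp [Lop, vecField, wz, du, Fin.sum_univ_three]
  ring

lemma Lbop_eq_vecField (φ : V3 → ℝ) :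
    Lbop φ = vecField ![fun _ => 1 / 2, fun _ => I / 2, fun q => conj (Afun φ q)] := by
  ext f p
  simp [Lbop, vecField, wzb, du, Fin.sum_univ_three]
  ring

lemma Tof_eq_vecField (φ : V3 → ℝ) : Tof φ = vecField ![fun _ => 0, fun _ => 0, ell φ] := by
  ext f p
  simp [Tof, vecField, du, Fin.sum_univ_three]

lemma conj_Lop : conj (Lop φ g p) = Lbop φ (fun q => conj (g q)) p := by
  simp only [Lop, Lbop, wz, wzb, du, pd_conj, map_add, map_mul, map_div₀, map_sub, conj_I,
    map_ofNat]
  ring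

lemma conj_Lbop : conj (Lbop φ g p) = Lop φ (fun q => conj (g q)) p := by
  simp only [Lop, Lbop, wz, wzb, du, pd_conj, map_add, map_mul, map_div₀, conj_I, conj_conj,
    map_ofNat]
  ring

lemma conj_ell : conj (ell φ p) = ell φ p := by
  simp only [ell, map_mul, map_sub, conj_I, conj_Lop, conj_Lbop, conj_conj]
  ring

lemma conj_Tof : conj (Tof φ g p) = Tof φ (fun q => conj (g q)) p := by
  simp [Tof, du, pd_conj, conj_ell]

lemma Pfun_mul_ell (hℓ : ell φ p ≠ 0) :
    Pfun φ p * ell φ p = Lop φ (ell φ) p - Tof φ (Afun φ) p := by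
  have hneg : (fun q => wz (cl φ) q / (I + du (cl φ) q)) = fun q => -Afun φ q := by
    ext q
    simp [Afun, neg_div]
  rw [Pfun, div_mul_cancel₀ _ hℓ, hneg]
  simp only [Tof, du, pd_neg]
  ring

lemma Lop_Lbop_commutator (hA : DifferentiableAt ℝ (Afun φ) p)
    (hAbar : DifferentiableAt ℝ (fun q => conj (Afun φ q)) p) (hf : ContDiff ℝ 2 f) :
    Lop φ (Lbop φ f) p - Lbop φ (Lop φ f) p = -I * Tof φ f p := by
  rw [Lop_eq_vecField, Lbop_eq_vecField, vecField_commutator_of_const _ _ _ _ hA hAbar hf,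
    ← Lop_eq_vecField, ← Lbop_eq_vecField, Tof, ell]
  linear_combination (Lop φ (fun q => conj (Afun φ q)) p - Lbop φ (Afun φ) p) * du f p * I_mul_I

lemma Lop_Tof_commutator (hA : DifferentiableAt ℝ (Afun φ) p)
    (hℓ : DifferentiableAt ℝ (ell φ) p) (hℓ0 : ell φ p ≠ 0) (hf : ContDiff ℝ 2 f) :
    Lop φ (Tof φ f) p - Tof φ (Lop φ f) p = Pfun φ p * Tof φ f p := by
  rw [Lop_eq_vecField, Tof_eq_vecField, vecField_commutator_of_const _ _ _ _ hA hℓ hf,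
    ← Lop_eq_vecField, ← Tof_eq_vecField, ← Pfun_mul_ell hℓ0, Tof]
  ring

lemma Lbop_Tof_commutator (hAbar : DifferentiableAt ℝ (fun q => conj (Afun φ q)) p)
    (hℓ : DifferentiableAt ℝ (ell φ) p) (hℓ0 : ell φ p ≠ 0) (hf : ContDiff ℝ 2 f) :
    Lbop φ (Tof φ f) p - Tof φ (Lbop φ f) p = conj (Pfun φ p) * Tof φ f p := by
  have hPbar : conj (Pfun φ p) * ell φ p
      = Lbop φ (ell φ) p - Tof φ (fun q => conj (Afun φ q)) p := by
    have hℓreal : (fun q => conj (ell φ q)) = ell φ := funext fun q => conj_ell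
    rw [← conj_ell, ← map_mul, Pfun_mul_ell hℓ0, map_sub, conj_Lop, conj_Tof, hℓreal]
  rw [Lbop_eq_vecField, Tof_eq_vecField, vecField_commutator_of_const _ _ _ _ hAbar hℓ hf,
    ← Lbop_eq_vecField, ← Tof_eq_vecField, ← hPbar, Tof]
  ring

end ClassI

section Regularity

variable {φ : V3 → ℝ} {n : WithTop ℕ∞}

lemma ContDiff.conj {g : V3 → ℂ} (hg : ContDiff ℝ n g) : ContDiff ℝ n (fun q => conj (g q)) :=
  conjCLE.toContinuousLinearMap.contDiff.comp hg

lemma ContDiff.cl (hφ : ContDiff ℝ n φ) : ContDiff ℝ n (cl φ) :=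
  ofRealCLM.contDiff.comp hφ

lemma I_add_du_cl_ne_zero (p : V3) : I + du (cl φ) p ≠ 0 := by
  have hreal : conj (du (cl φ) p) = du (cl φ) p := by
    have hcl : (fun q => conj (cl φ q)) = cl φ := funext fun q => conj_ofReal _
    rw [du, ← pd_conj, hcl]
  intro h
  have him := congrArg Complex.im h
  simp [conj_eq_iff_im.mp hreal] at him

lemma contDiff_Afun (hφ : ContDiff ℝ 3 φ) : ContDiff ℝ 2 (Afun φ) := by
  have hcl : ContDiff ℝ 3 (cl φ) := hφ.cl
  have hpd : ∀ j, ContDiff ℝ 2 (pd j (cl φ)) := fun j => hcl.pd (by norm_num)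
  have hwz : ContDiff ℝ 2 (wz (cl φ)) :=
    ((hpd 0).sub (contDiff_const.mul (hpd 1))).div_const 2
  change ContDiff ℝ 2 fun p => -wz (cl φ) p / (I + du (cl φ) p)
  simpa only [div_eq_mul_inv, Pi.inv_apply, du] using
    hwz.neg.mul ((contDiff_const.add (hpd 2)).inv I_add_du_cl_ne_zero)

lemma contDiff_ell (hφ : ContDiff ℝ 3 φ) : ContDiff ℝ 1 (ell φ) := by
  have hA : ContDiff ℝ 2 (Afun φ) := contDiff_Afun hφ
  have hcoeff : ∀ (α β : ℂ) {c : V3 → ℂ}, ContDiff ℝ 1 c →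
      ∀ k, ContDiff ℝ 1 (![fun _ => α, fun _ => β, c] k) := by
    intro α β c hc k
    fin_cases k
    exacts [contDiff_const, contDiff_const, hc]
  have hL := hA.conj.vecField (hcoeff (1 / 2) (-I / 2) (hA.of_le one_le_two)) (by norm_num)
  have hLbar := hA.vecField (hcoeff (1 / 2) (I / 2) (hA.conj.of_le one_le_two)) (by norm_num)
  rw [← Lop_eq_vecField] at hL
  rw [← Lbop_eq_vecField] at hLbar
  exact contDiff_const.mul (hL.sub hLbar)

end Regularity

/-- Lie structure `[L, L̄] = −i T`, `[L, T] = P·T`, `[L̄, T] = P̄·T` of the frame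
`{L, L̄, T}` for a hypersurface `M³ ⊂ ℂ²` of General Class I. -/
theorem class_I_lie_structure (φ : V3 → ℝ) (hφ : ContDiff ℝ 3 φ)
    (hℓ : ∀ p, ell φ p ≠ 0) :
    ∀ f : V3 → ℂ, ContDiff ℝ 2 f → ∀ p,
      (Lop φ (Lbop φ f) p - Lbop φ (Lop φ f) p = -I * Tof φ f p) ∧
      (Lop φ (Tof φ f) p - Tof φ (Lop φ f) p = Pfun φ p * Tof φ f p) ∧
      (Lbop φ (Tof φ f) p - Tof φ (Lbop φ f) p = conj (Pfun φ p) * Tof φ f p) := by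
  intro f hf p
  have hA : DifferentiableAt ℝ (Afun φ) p :=
    (contDiff_Afun hφ).differentiable two_ne_zero p
  have hAbar : DifferentiableAt ℝ (fun q => conj (Afun φ q)) p :=
    (contDiff_Afun hφ).conj.differentiable two_ne_zero p
  have hℓdiff : DifferentiableAt ℝ (ell φ) p := (contDiff_ell hφ).differentiable one_ne_zero p
  exact ⟨Lop_Lbop_commutator hA hAbar hf, Lop_Tof_commutator hA hℓdiff (hℓ p) hf,
    Lbop_Tof_commutator hAbar hℓdiff (hℓ p) hf⟩

end
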